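/- arXiv:2306.05023 — 3 statements merged into one kernel-verified Lean document; each statement's English description precedes it below -/
import Mathlib

section
/- Let U ∈ ℝ^{m×n}, c > 0, and W = Uᵀ(U Uᵀ + c I)⁻¹. Then for any symmetric positive semidefinite matrix Σ ∈ ℝ^{m×m}, trace((UW−I)Σ(UW−I)ᵀ) + c·trace(WΣWᵀ) = c·trace(Σ(UUᵀ + cI)⁻¹). -/
open Matrix

/-- For `W = Uᵀ (U Uᵀ + c I)⁻¹` and `Σ` symmetric PSD,
`trace((UW−I) Σ (UW−I)ᵀ) + c trace(W Σ Wᵀ) = c trace(Σ (U Uᵀ + c I)⁻¹)`. -/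
theorem stmt3 {m n : ℕ} (U : Matrix (Fin m) (Fin n) ℝ) (c : ℝ) (hc : 0 < c)
    (W : Matrix (Fin n) (Fin m) ℝ) (hW : W = Uᵀ * (U * Uᵀ + c • 1)⁻¹)
    (S : Matrix (Fin m) (Fin m) ℝ) (hS : S.PosSemidef) :
    ((U * W - 1) * S * (U * W - 1)ᵀ).trace + c * (W * S * Wᵀ).trace
      = c * (S * (U * Uᵀ + c • 1)⁻¹).trace := by
  set A : Matrix (Fin m) (Fin m) ℝ := U * Uᵀ + c • 1 with hA
  have hUU : (U * Uᵀ).PosSemidef := by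
    have := Matrix.posSemidef_conjTranspose_mul_self Uᵀ
    simpa using this
  have hApd : A.PosDef := by
    rw [hA, Matrix.smul_one_eq_diagonal]
    exact Matrix.PosDef.posSemidef_add hUU (Matrix.posDef_diagonal_iff.2 fun _ => hc)
  have hunit : IsUnit A.det := isUnit_iff_ne_zero.2 hApd.det_pos.ne'
  set M : Matrix (Fin m) (Fin m) ℝ := A⁻¹ with hM
  have hMA : M * A = 1 := Matrix.nonsing_inv_mul A hunit
  have hAM : A * M = 1 := Matrix.mul_nonsing_inv A hunit
  have hAsymm : Aᵀ = A := by
    rw [hA]; simp [Matrix.transpose_add, Matrix.transpose_mul]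
  have hMsymm : Mᵀ = M := by
    rw [hM, Matrix.transpose_nonsing_inv, hAsymm]
  have hUW : U * W = 1 - c • M := by
    rw [hW, ← Matrix.mul_assoc]
    have h : U * Uᵀ = A - c • 1 := by rw [hA]; abel
    rw [h, Matrix.sub_mul, hAM, Matrix.smul_mul, Matrix.one_mul]
  have h1 : U * W - 1 = -(c • M) := by rw [hUW]; abel
  have key : ((U * W - 1) * S * (U * W - 1)ᵀ).trace = c * c * (M * S * Mᵀ).trace := by
    rw [h1]
    simp [Matrix.transpose_smul, Matrix.smul_mul, Matrix.mul_smul, Matrix.trace_smul,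
      smul_eq_mul, mul_assoc]
  have h2 : (W * S * Wᵀ).trace = (M * S * Mᵀ * (U * Uᵀ)).trace := by
    rw [hW, Matrix.transpose_mul, Matrix.transpose_transpose, hMsymm]
    rw [show Uᵀ * M * S * (M * U) = Uᵀ * (M * S * (M * U)) by
      simp [Matrix.mul_assoc]]
    rw [Matrix.trace_mul_comm]
    simp [Matrix.mul_assoc, hMsymm]
  rw [key, h2]
  have expand : c * (M * S * Mᵀ * (U * Uᵀ)).trace + c * c * (M * S * Mᵀ).trace
      = c * (M * S * (Mᵀ * A)).trace := by
    rw [hA]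
    simp only [Matrix.mul_add, Matrix.trace_add, Matrix.mul_smul, Matrix.mul_one,
      Matrix.trace_smul, smul_eq_mul, Matrix.mul_assoc]
    ring
  rw [add_comm, expand, hMsymm, hMA, Matrix.mul_one, Matrix.trace_mul_comm]
end

section
/- Let Z ∈ ℝ^{D×n} with singular values θ₁ ≥ θ₂ ≥ … ≥ 0, let U ∈ ℝ^{D×d} with singular values λ₁ ≥ λ₂ ≥ … ≥ 0, and let β > 0. Then trace(Z Zᵀ U (Uᵀ U + β I)⁻¹ Uᵀ) ≤ Σ_{i=1}^{min(d, D)} θᵢ² λᵢ² / (λᵢ² + β), where θᵢ is taken as 0 when i exceeds the number of singular values of Z. -/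
open Matrix Finset

lemma vn_key {D : ℕ} (f g : Fin D → ℝ) (hfg : Monovary f g)
    (S : Matrix (Fin D) (Fin D) ℝ) (hS : S ∈ doublyStochastic ℝ (Fin D)) :
    ∑ i, ∑ j, f i * g j * S i j ≤ ∑ i, f i * g i := by
  obtain ⟨w, hw0, hw1, hwS⟩ := exists_eq_sum_perm_of_mem_doublyStochastic hS
  have hperm : ∀ σ : Equiv.Perm (Fin D),
      ∑ i, ∑ j, f i * g j * (σ.permMatrix ℝ) i j = ∑ i, f i * g (σ i) := by
    intro σ
    refine Finset.sum_congr rfl fun i _ => ?_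
    simp [PEquiv.toMatrix_apply, Equiv.toPEquiv_apply, mul_ite, eq_comm]
  calc ∑ i, ∑ j, f i * g j * S i j
      = ∑ i, ∑ j, ∑ σ : Equiv.Perm (Fin D), w σ * (f i * g j * (σ.permMatrix ℝ) i j) := by
        rw [← hwS]
        refine Finset.sum_congr rfl fun i _ => Finset.sum_congr rfl fun j _ => ?_
        rw [Matrix.sum_apply, Finset.mul_sum]
        exact Finset.sum_congr rfl fun σ _ => by simp only [Matrix.smul_apply, smul_eq_mul]; ring
    _ = ∑ σ : Equiv.Perm (Fin D), w σ * ∑ i, f i * g (σ i) := by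
        have h1 : ∀ i : Fin D,
            ∑ j, ∑ σ : Equiv.Perm (Fin D), w σ * (f i * g j * (σ.permMatrix ℝ) i j)
            = ∑ σ : Equiv.Perm (Fin D), ∑ j, w σ * (f i * g j * (σ.permMatrix ℝ) i j) :=
          fun i => Finset.sum_comm
        simp only [h1]
        rw [Finset.sum_comm]
        refine Finset.sum_congr rfl fun σ _ => ?_
        rw [← hperm σ]
        simp only [Finset.mul_sum]
    _ ≤ ∑ σ : Equiv.Perm (Fin D), w σ * ∑ i, f i * g i := by
        refine Finset.sum_le_sum fun σ _ => mul_le_mul_of_nonneg_left ?_ (hw0 σ)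
        exact hfg.sum_mul_comp_perm_le_sum_mul
    _ = ∑ i, f i * g i := by rw [← Finset.sum_mul, hw1, one_mul]

/-- Von Neumann–type bound: with `θ` the singular values of `Z` and `λ` those of `U`
(both non-increasing, padded with zeros),
`trace(Z Zᵀ U (UᵀU + β I)⁻¹ Uᵀ) ≤ Σᵢ θᵢ² λᵢ² / (λᵢ² + β)`. -/
theorem stmt12 {D d n : ℕ} (Z : Matrix (Fin D) (Fin n) ℝ) (U : Matrix (Fin D) (Fin d) ℝ)
    (β : ℝ) (hβ : 0 < β) (θ lam : Fin D → ℝ)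
    (hθmono : Antitone θ) (hθ0 : ∀ i, 0 ≤ θ i)
    (hlmono : Antitone lam) (hl0 : ∀ i, 0 ≤ lam i)
    (hZ : ∃ P : Matrix (Fin D) (Fin D) ℝ,
      Pᵀ * P = 1 ∧ Z * Zᵀ = P * Matrix.diagonal (fun i => θ i ^ 2) * Pᵀ)
    (hU : ∃ Q : Matrix (Fin D) (Fin D) ℝ,
      Qᵀ * Q = 1 ∧ U * Uᵀ = Q * Matrix.diagonal (fun i => lam i ^ 2) * Qᵀ) :
    (Z * Zᵀ * U * (Uᵀ * U + β • 1)⁻¹ * Uᵀ).trace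
      ≤ ∑ i, θ i ^ 2 * lam i ^ 2 / (lam i ^ 2 + β) := by
  obtain ⟨P, hP, hZP⟩ := hZ
  obtain ⟨Q, hQ, hUQ⟩ := hU
  have hPP : P * Pᵀ = 1 := mul_eq_one_comm.mp hP
  have hQQ : Q * Qᵀ = 1 := mul_eq_one_comm.mp hQ
  set a : Fin D → ℝ := fun i => θ i ^ 2 with ha
  set g : Fin D → ℝ := fun i => lam i ^ 2 / (lam i ^ 2 + β) with hg
  have hden : ∀ i, 0 < lam i ^ 2 + β := fun i => by positivity
  -- invertibility of A := Uᵀ*U + β•1 and B := U*Uᵀ + β•1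
  set A : Matrix (Fin d) (Fin d) ℝ := Uᵀ * U + β • 1 with hA
  set B : Matrix (Fin D) (Fin D) ℝ := U * Uᵀ + β • 1 with hB
  have hβ1 : ∀ m : ℕ, Matrix.PosDef (β • 1 : Matrix (Fin m) (Fin m) ℝ) := by
    intro m
    rw [Matrix.smul_one_eq_diagonal]
    exact Matrix.posDef_diagonal_iff.mpr fun _ => hβ
  have hApd : A.PosDef := by
    have := (Matrix.posSemidef_conjTranspose_mul_self U)
    simpa [hA, Matrix.conjTranspose_eq_transpose_of_trivial] using Matrix.PosDef.posSemidef_add this (hβ1 d)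
  have hBpd : B.PosDef := by
    have := (Matrix.posSemidef_self_mul_conjTranspose U)
    simpa [hB, Matrix.conjTranspose_eq_transpose_of_trivial] using Matrix.PosDef.posSemidef_add this (hβ1 D)
  have hAu : IsUnit A.det := hApd.det_pos.ne'.isUnit
  have hBu : IsUnit B.det := hBpd.det_pos.ne'.isUnit
  -- push-through
  have hpush : B * U = U * A := by
    rw [hA, hB, Matrix.add_mul, Matrix.mul_add]
    rw [Matrix.smul_mul, Matrix.mul_smul, Matrix.one_mul, Matrix.mul_one, Matrix.mul_assoc]
  have hUA : U * A⁻¹ = B⁻¹ * U := by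
    have h1 : B⁻¹ * (B * U) * A⁻¹ = B⁻¹ * (U * A) * A⁻¹ := by rw [hpush]
    rw [← Matrix.mul_assoc, Matrix.nonsing_inv_mul B hBu, Matrix.one_mul] at h1
    rw [Matrix.mul_assoc, Matrix.mul_assoc, Matrix.mul_nonsing_inv A hAu, Matrix.mul_one] at h1
    exact h1
  -- B and its inverse via Q
  have hBdiag : B = Q * Matrix.diagonal (fun i => lam i ^ 2 + β) * Qᵀ := by
    have : Matrix.diagonal (fun i : Fin D => lam i ^ 2 + β)
        = Matrix.diagonal (fun i => lam i ^ 2) + β • 1 := by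
      rw [Matrix.smul_one_eq_diagonal, Matrix.diagonal_add]
    rw [hB, hUQ, this, Matrix.mul_add, Matrix.add_mul]
    congr 1
    rw [Matrix.mul_smul, Matrix.mul_one, Matrix.smul_mul, hQQ]
  have hBinv : B⁻¹ = Q * Matrix.diagonal (fun i => (lam i ^ 2 + β)⁻¹) * Qᵀ := by
    refine Matrix.inv_eq_right_inv ?_
    rw [hBdiag]
    simp only [Matrix.mul_assoc]
    rw [← Matrix.mul_assoc Qᵀ Q, hQ, Matrix.one_mul,
      ← Matrix.mul_assoc (Matrix.diagonal _) (Matrix.diagonal _), Matrix.diagonal_mul_diagonal]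
    have : (fun i : Fin D => (lam i ^ 2 + β) * (lam i ^ 2 + β)⁻¹) = fun _ => (1:ℝ) := by
      funext i; exact mul_inv_cancel₀ (hden i).ne'
    rw [this, Matrix.diagonal_one, Matrix.one_mul, hQQ]
  -- the projector M
  have hM : U * A⁻¹ * Uᵀ = Q * Matrix.diagonal g * Qᵀ := by
    rw [hUA, Matrix.mul_assoc, hUQ, hBinv]
    simp only [Matrix.mul_assoc]
    rw [← Matrix.mul_assoc Qᵀ Q, hQ, Matrix.one_mul,
      ← Matrix.mul_assoc (Matrix.diagonal _) (Matrix.diagonal _), Matrix.diagonal_mul_diagonal]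
    congr 2
    funext i
    rw [hg]
    field_simp
  -- R and double stochasticity
  set R : Matrix (Fin D) (Fin D) ℝ := Pᵀ * Q with hRdef
  have hRR : R * Rᵀ = 1 := by
    rw [hRdef, Matrix.transpose_mul, Matrix.transpose_transpose]
    rw [Matrix.mul_assoc, ← Matrix.mul_assoc Q, hQQ, Matrix.one_mul, hP]
  have hRtR : Rᵀ * R = 1 := mul_eq_one_comm.mp hRR
  set S : Matrix (Fin D) (Fin D) ℝ := fun i j => R i j ^ 2 with hSdef
  have hSmem : S ∈ doublyStochastic ℝ (Fin D) := by
    rw [mem_doublyStochastic_iff_sum]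
    refine ⟨fun i j => sq_nonneg _, fun i => ?_, fun j => ?_⟩
    · have := congrFun (congrFun hRR i) i
      simp only [Matrix.mul_apply, Matrix.transpose_apply, Matrix.one_apply_eq] at this
      rw [← this]
      exact Finset.sum_congr rfl fun j _ => by rw [hSdef]; exact pow_two (R i j)
    · have := congrFun (congrFun hRtR j) j
      simp only [Matrix.mul_apply, Matrix.transpose_apply, Matrix.one_apply_eq] at this
      rw [← this]
      exact Finset.sum_congr rfl fun i _ => by rw [hSdef]; exact pow_two (R i j)
  -- trace computation
  have hassoc : Z * Zᵀ * U * (Uᵀ * U + β • 1)⁻¹ * Uᵀ = Z * Zᵀ * (U * A⁻¹ * Uᵀ) := by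
    simp only [hA, Matrix.mul_assoc]
  have htr : (Z * Zᵀ * U * (Uᵀ * U + β • 1)⁻¹ * Uᵀ).trace
      = ∑ i, ∑ j, a i * g j * S i j := by
    rw [hassoc, hZP, hM]
    have step : (P * Matrix.diagonal a * Pᵀ * (Q * Matrix.diagonal g * Qᵀ)).trace
        = (Matrix.diagonal a * (R * (Matrix.diagonal g * Rᵀ))).trace := by
      rw [hRdef, Matrix.transpose_mul, Matrix.transpose_transpose]
      simp only [Matrix.mul_assoc]
      rw [Matrix.trace_mul_comm P]
      simp only [Matrix.mul_assoc]
    rw [step, Matrix.trace]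
    refine Finset.sum_congr rfl fun i _ => ?_
    rw [Matrix.diag_apply, Matrix.diagonal_mul, Matrix.mul_apply, Finset.mul_sum]
    refine Finset.sum_congr rfl fun j _ => ?_
    rw [Matrix.diagonal_mul, Matrix.transpose_apply, hSdef]
    ring
  rw [htr]
  -- monovary
  have hgmono : Antitone g := by
    intro i j hij
    have h1 : lam j ^ 2 ≤ lam i ^ 2 := by
      have := hlmono hij
      nlinarith [hl0 i, hl0 j]
    rw [hg]
    rw [div_le_div_iff₀ (hden j) (hden i)]
    nlinarith
  have hamono : Antitone a := by
    intro i j hij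
    have := hθmono hij
    have := hθ0 i; have := hθ0 j
    simp only [ha]
    nlinarith
  have hmono : Monovary a g := hamono.monovary hgmono
  calc ∑ i, ∑ j, a i * g j * S i j ≤ ∑ i, a i * g i := vn_key a g hmono S hSmem
    _ = ∑ i, θ i ^ 2 * lam i ^ 2 / (lam i ^ 2 + β) := by
        refine Finset.sum_congr rfl fun i _ => ?_
        rw [ha, hg, mul_div_assoc]
end

section
/- Let σ₁ > 0, β₁ > 0, β₂ > 0, η_dec > 0, η_enc > 0, θ ≥ 0, and c = η_dec/η_enc. Consider g(λ, ω) = σ₁² θ²/(λ² + σ₁²) + c² β₂ (λ² + σ₁²)/(ω² + c² β₂/β₁) + β₂ η_dec² log(ω² + c² β₂/β₁) over λ, ω ≥ 0 subject to the stationarity constraint that either ω = 0 or ω² + c²β₂/β₁ = (λ² + σ₁²)/η_enc². If σ₁² < (β₂/β₁) η_dec² and σ₁² θ² ≥ (β₂²/β₁) η_dec⁴, then the constrained minimum is attained at λ* = (σ₁/(√β₂ η_dec)) √(θ² − β₂ η_dec²) and ω* = √(σ₁² θ²/(β₂ η_enc² η_dec²) − (β₂/β₁) c²). -/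
set_option maxHeartbeats 1000000

private lemma aux1 (c β₁ β₂ d e : ℝ) (hβ₁ : 0 < β₁) (hβ₂ : 0 < β₂) (hd : 0 < d)
    (he : 0 < e) (hce : c ^ 2 = d ^ 2 / e ^ 2) :
    (0:ℝ) ^ 2 + c ^ 2 * β₂ / β₁ = β₂ * d ^ 2 / (β₁ * e ^ 2) := by
  rw [hce]; field_simp; ring

private lemma aux2 (c β₁ β₂ d e A : ℝ) (hβ₁ : 0 < β₁) (hβ₂ : 0 < β₂) (hd : 0 < d)
    (he : 0 < e) (hce : c ^ 2 = d ^ 2 / e ^ 2) :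
    c ^ 2 * β₂ * A / (β₂ * d ^ 2 / (β₁ * e ^ 2)) = β₁ * A := by
  rw [hce]; field_simp

private lemma aux3 (β₁ β₂ d e K : ℝ) (hβ₁ : 0 < β₁) (hβ₂ : 0 < β₂) (hd : 0 < d)
    (he : 0 < e) :
    K / (β₂ * d ^ 2 * e ^ 2) = K * β₁ / (β₂ * d ^ 2) ^ 2 * (β₂ * d ^ 2 / (β₁ * e ^ 2)) := by
  field_simp

private lemma aux4 (c β₂ d e K : ℝ) (hβ₂ : 0 < β₂) (hd : 0 < d) (he : 0 < e)
    (hK : K ≠ 0) (hce : c ^ 2 = d ^ 2 / e ^ 2) :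
    c ^ 2 * β₂ * (K / (β₂ * d ^ 2)) / (K / (β₂ * d ^ 2 * e ^ 2)) = β₂ * d ^ 2 := by
  rw [hce]; field_simp

private lemma aux5 (c β₂ d e A : ℝ) (hβ₂ : 0 < β₂) (hd : 0 < d) (he : 0 < e)
    (hA : A ≠ 0) (hce : c ^ 2 = d ^ 2 / e ^ 2) :
    c ^ 2 * β₂ * A / (A / e ^ 2) = β₂ * d ^ 2 := by
  rw [hce]; field_simp

private lemma aux6 (β₂ d e K A : ℝ) (hβ₂ : 0 < β₂) (hd : 0 < d) (he : 0 < e)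
    (hA : A ≠ 0) :
    K / (β₂ * d ^ 2 * e ^ 2) = K / (β₂ * d ^ 2 * A) * (A / e ^ 2) := by
  field_simp


/-- Case (a) of the hierarchical VAE optimization: under the stationarity constraint
(either `ω = 0` or `η_enc²(ω² + c²β₂/β₁) = λ² + σ₁²`), if `σ₁² < (β₂/β₁)η_dec²` and
`σ₁²θ² ≥ (β₂²/β₁)η_dec⁴`, the constrained minimum of `g` is attained at
`λ* = (σ₁/(√β₂ η_dec))√(θ² − β₂η_dec²)` and
`ω* = √(σ₁²θ²/(β₂η_enc²η_dec²) − (β₂/β₁)c²)`. -/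
theorem stmt18 (σ₁ β₁ β₂ ηdec ηenc θ : ℝ) (hσ : 0 < σ₁) (hβ₁ : 0 < β₁) (hβ₂ : 0 < β₂)
    (hd : 0 < ηdec) (he : 0 < ηenc) (hθ : 0 ≤ θ) (c : ℝ) (hc : c = ηdec / ηenc)
    (g : ℝ → ℝ → ℝ)
    (hg : ∀ l ω, g l ω = σ₁ ^ 2 * θ ^ 2 / (l ^ 2 + σ₁ ^ 2)
      + c ^ 2 * β₂ * (l ^ 2 + σ₁ ^ 2) / (ω ^ 2 + c ^ 2 * β₂ / β₁)
      + β₂ * ηdec ^ 2 * Real.log (ω ^ 2 + c ^ 2 * β₂ / β₁))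
    (h1 : σ₁ ^ 2 < (β₂ / β₁) * ηdec ^ 2)
    (h2 : σ₁ ^ 2 * θ ^ 2 ≥ (β₂ ^ 2 / β₁) * ηdec ^ 4) :
    (0 ≤ (σ₁ / (Real.sqrt β₂ * ηdec)) * Real.sqrt (θ ^ 2 - β₂ * ηdec ^ 2) ∧
     0 ≤ Real.sqrt (σ₁ ^ 2 * θ ^ 2 / (β₂ * ηenc ^ 2 * ηdec ^ 2) - (β₂ / β₁) * c ^ 2) ∧
     (Real.sqrt (σ₁ ^ 2 * θ ^ 2 / (β₂ * ηenc ^ 2 * ηdec ^ 2) - (β₂ / β₁) * c ^ 2) = 0 ∨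
      ηenc ^ 2 * (Real.sqrt (σ₁ ^ 2 * θ ^ 2 / (β₂ * ηenc ^ 2 * ηdec ^ 2)
          - (β₂ / β₁) * c ^ 2) ^ 2 + c ^ 2 * β₂ / β₁)
        = ((σ₁ / (Real.sqrt β₂ * ηdec)) * Real.sqrt (θ ^ 2 - β₂ * ηdec ^ 2)) ^ 2 + σ₁ ^ 2)) ∧
    ∀ l ω, 0 ≤ l → 0 ≤ ω →
      (ω = 0 ∨ ηenc ^ 2 * (ω ^ 2 + c ^ 2 * β₂ / β₁) = l ^ 2 + σ₁ ^ 2) →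
      g ((σ₁ / (Real.sqrt β₂ * ηdec)) * Real.sqrt (θ ^ 2 - β₂ * ηdec ^ 2))
        (Real.sqrt (σ₁ ^ 2 * θ ^ 2 / (β₂ * ηenc ^ 2 * ηdec ^ 2) - (β₂ / β₁) * c ^ 2))
        ≤ g l ω := by
  have hc2 : c ^ 2 = ηdec ^ 2 / ηenc ^ 2 := by rw [hc, div_pow]
  have h2' : β₂ ^ 2 * ηdec ^ 4 ≤ σ₁ ^ 2 * θ ^ 2 * β₁ := by
    rw [ge_iff_le, div_mul_eq_mul_div, div_le_iff₀ hβ₁] at h2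
    linarith
  have h1' : σ₁ ^ 2 * β₁ < β₂ * ηdec ^ 2 := by
    rw [div_mul_eq_mul_div, lt_div_iff₀ hβ₁] at h1
    linarith
  have hK : 0 < σ₁ ^ 2 * θ ^ 2 := by
    have h3 : 0 < σ₁ ^ 2 * θ ^ 2 * β₁ := lt_of_lt_of_le (by positivity) h2'
    have h4 : 0 ≤ σ₁ ^ 2 * θ ^ 2 := by positivity
    rcases h4.lt_or_eq with h | h
    · exact h
    · exfalso; rw [← h, zero_mul] at h3; exact lt_irrefl 0 h3
  have hM : 0 < β₂ * ηdec ^ 2 := by positivity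
  have hθM : β₂ * ηdec ^ 2 ≤ θ ^ 2 := by
    have hP : 0 < σ₁ ^ 2 * β₁ := by positivity
    have hA : σ₁ ^ 2 * β₁ * (β₂ * ηdec ^ 2) < σ₁ ^ 2 * β₁ * θ ^ 2 := by
      have hB := mul_lt_mul_of_pos_right h1' hM
      linarith [h2']
    exact (le_of_lt (lt_of_mul_lt_mul_left hA hP.le))
  -- squares of the candidate point
  have hsb : Real.sqrt β₂ ^ 2 = β₂ := Real.sq_sqrt hβ₂.le
  have hst : Real.sqrt (θ ^ 2 - β₂ * ηdec ^ 2) ^ 2 = θ ^ 2 - β₂ * ηdec ^ 2 :=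
    Real.sq_sqrt (by linarith)
  have hLsq : ((σ₁ / (Real.sqrt β₂ * ηdec)) * Real.sqrt (θ ^ 2 - β₂ * ηdec ^ 2)) ^ 2
      = σ₁ ^ 2 * (θ ^ 2 - β₂ * ηdec ^ 2) / (β₂ * ηdec ^ 2) := by
    rw [mul_pow, div_pow, mul_pow, hsb, hst]; ring
  have hWnn : 0 ≤ σ₁ ^ 2 * θ ^ 2 / (β₂ * ηenc ^ 2 * ηdec ^ 2) - (β₂ / β₁) * c ^ 2 := by
    rw [sub_nonneg, hc2, div_mul_div_comm, div_le_div_iff₀ (by positivity) (by positivity)]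
    linarith [mul_le_mul_of_nonneg_right h2' (le_of_lt (pow_pos he 2))]
  have hWsq : Real.sqrt (σ₁ ^ 2 * θ ^ 2 / (β₂ * ηenc ^ 2 * ηdec ^ 2) - (β₂ / β₁) * c ^ 2) ^ 2
      = σ₁ ^ 2 * θ ^ 2 / (β₂ * ηenc ^ 2 * ηdec ^ 2) - (β₂ / β₁) * c ^ 2 := Real.sq_sqrt hWnn
  have ha1 : ((σ₁ / (Real.sqrt β₂ * ηdec)) * Real.sqrt (θ ^ 2 - β₂ * ηdec ^ 2)) ^ 2 + σ₁ ^ 2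
      = σ₁ ^ 2 * θ ^ 2 / (β₂ * ηdec ^ 2) := by
    rw [hLsq]; field_simp; ring
  have ha2 : Real.sqrt (σ₁ ^ 2 * θ ^ 2 / (β₂ * ηenc ^ 2 * ηdec ^ 2) - (β₂ / β₁) * c ^ 2) ^ 2
      + c ^ 2 * β₂ / β₁ = σ₁ ^ 2 * θ ^ 2 / (β₂ * ηdec ^ 2 * ηenc ^ 2) := by
    rw [hWsq, hc2]; field_simp; ring
  refine ⟨⟨by positivity, Real.sqrt_nonneg _, Or.inr ?_⟩, ?_⟩
  · rw [ha1, ha2]; field_simp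
  · intro l ω hl hω hcon
    have hapos : 0 < l ^ 2 + σ₁ ^ 2 := by positivity
    rw [hg, hg, ha1, ha2]
    have e1 : σ₁ ^ 2 * θ ^ 2 / (σ₁ ^ 2 * θ ^ 2 / (β₂ * ηdec ^ 2)) = β₂ * ηdec ^ 2 := by
      rw [div_div_eq_mul_div, mul_comm (σ₁ ^ 2 * θ ^ 2) (β₂ * ηdec ^ 2), mul_div_assoc,
        div_self (ne_of_gt hK), mul_one]
    have e2 : c ^ 2 * β₂ * (σ₁ ^ 2 * θ ^ 2 / (β₂ * ηdec ^ 2))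
        / (σ₁ ^ 2 * θ ^ 2 / (β₂ * ηdec ^ 2 * ηenc ^ 2)) = β₂ * ηdec ^ 2 :=
      aux4 c β₂ ηdec ηenc _ hβ₂ hd he (ne_of_gt hK) hc2
    rw [e1, e2]
    rcases hcon with hw0 | hcs
    · -- ω = 0 branch
      subst hw0
      have hs0 : (0:ℝ) ^ 2 + c ^ 2 * β₂ / β₁ = β₂ * ηdec ^ 2 / (β₁ * ηenc ^ 2) :=
        aux1 c β₁ β₂ ηdec ηenc hβ₁ hβ₂ hd he hc2
      rw [hs0]
      have e3 : c ^ 2 * β₂ * (l ^ 2 + σ₁ ^ 2) / (β₂ * ηdec ^ 2 / (β₁ * ηenc ^ 2))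
          = β₁ * (l ^ 2 + σ₁ ^ 2) :=
        aux2 c β₁ β₂ ηdec ηenc _ hβ₁ hβ₂ hd he hc2
      rw [e3]
      have hlog1 : Real.log (σ₁ ^ 2 * θ ^ 2 / (β₂ * ηdec ^ 2 * ηenc ^ 2))
          = Real.log (σ₁ ^ 2 * θ ^ 2 * β₁ / (β₂ * ηdec ^ 2) ^ 2)
            + Real.log (β₂ * ηdec ^ 2 / (β₁ * ηenc ^ 2)) := by
        rw [← Real.log_mul (by positivity) (by positivity)]
        congr 1
        exact aux3 β₁ β₂ ηdec ηenc _ hβ₁ hβ₂ hd he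
      rw [hlog1]
      set u : ℝ := Real.sqrt (σ₁ ^ 2 * θ ^ 2) * Real.sqrt β₁ / (β₂ * ηdec ^ 2) with hu
      have hupos : 0 < u := by
        rw [hu]; positivity
      have hu2 : u ^ 2 = σ₁ ^ 2 * θ ^ 2 * β₁ / (β₂ * ηdec ^ 2) ^ 2 := by
        rw [hu, div_pow, mul_pow, Real.sq_sqrt hK.le, Real.sq_sqrt hβ₁.le]
      have hlogu : Real.log u ≤ u - 1 := Real.log_le_sub_one_of_pos hupos
      have hlogr : Real.log (σ₁ ^ 2 * θ ^ 2 * β₁ / (β₂ * ηdec ^ 2) ^ 2) = 2 * Real.log u := by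
        rw [← hu2, Real.log_pow]; push_cast; ring
      have hMu : β₂ * ηdec ^ 2 * u = Real.sqrt (σ₁ ^ 2 * θ ^ 2) * Real.sqrt β₁ := by
        rw [hu]; field_simp
      have h₁ : β₂ * ηdec ^ 2 * Real.log u
          ≤ Real.sqrt (σ₁ ^ 2 * θ ^ 2) * Real.sqrt β₁ - β₂ * ηdec ^ 2 := by
        have h := mul_le_mul_of_nonneg_left hlogu hM.le
        rw [mul_sub, mul_one, hMu] at h
        exact h
      have key : 2 * (Real.sqrt (σ₁ ^ 2 * θ ^ 2) * Real.sqrt β₁)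
          ≤ σ₁ ^ 2 * θ ^ 2 / (l ^ 2 + σ₁ ^ 2) + β₁ * (l ^ 2 + σ₁ ^ 2) := by
        have hexp : 0 ≤ σ₁ ^ 2 * θ ^ 2
            - 2 * (Real.sqrt (σ₁ ^ 2 * θ ^ 2) * Real.sqrt β₁) * (l ^ 2 + σ₁ ^ 2)
            + β₁ * (l ^ 2 + σ₁ ^ 2) ^ 2 := by
          have h := sq_nonneg
            (Real.sqrt (σ₁ ^ 2 * θ ^ 2) - Real.sqrt β₁ * (l ^ 2 + σ₁ ^ 2))
          rw [sub_sq, mul_pow, Real.sq_sqrt hK.le, Real.sq_sqrt hβ₁.le] at h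
          linarith [h]
        have hrw : σ₁ ^ 2 * θ ^ 2 / (l ^ 2 + σ₁ ^ 2) + β₁ * (l ^ 2 + σ₁ ^ 2)
            = (σ₁ ^ 2 * θ ^ 2 + β₁ * (l ^ 2 + σ₁ ^ 2) ^ 2) / (l ^ 2 + σ₁ ^ 2) := by
          field_simp
        rw [hrw, le_div_iff₀ hapos]
        linarith [hexp]
      rw [hlogr]
      linarith [h₁, key]
    · -- stationarity branch
      have hcpos : 0 < c := by rw [hc]; positivity
      have hspos : 0 < ω ^ 2 + c ^ 2 * β₂ / β₁ := by positivity
      have hsa : ω ^ 2 + c ^ 2 * β₂ / β₁ = (l ^ 2 + σ₁ ^ 2) / ηenc ^ 2 := by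
        rw [eq_div_iff (by positivity)]
        linarith [hcs]
      rw [hsa]
      have e4 : c ^ 2 * β₂ * (l ^ 2 + σ₁ ^ 2) / ((l ^ 2 + σ₁ ^ 2) / ηenc ^ 2)
          = β₂ * ηdec ^ 2 :=
        aux5 c β₂ ηdec ηenc _ hβ₂ hd he (ne_of_gt hapos) hc2
      rw [e4]
      have hlog2 : Real.log (σ₁ ^ 2 * θ ^ 2 / (β₂ * ηdec ^ 2 * ηenc ^ 2))
          = Real.log (σ₁ ^ 2 * θ ^ 2 / (β₂ * ηdec ^ 2 * (l ^ 2 + σ₁ ^ 2)))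
            + Real.log ((l ^ 2 + σ₁ ^ 2) / ηenc ^ 2) := by
        rw [← Real.log_mul (by positivity) (by positivity)]
        congr 1
        exact aux6 β₂ ηdec ηenc _ _ hβ₂ hd he (ne_of_gt hapos)
      rw [hlog2]
      have hlx : Real.log (σ₁ ^ 2 * θ ^ 2 / (β₂ * ηdec ^ 2 * (l ^ 2 + σ₁ ^ 2)))
          ≤ σ₁ ^ 2 * θ ^ 2 / (β₂ * ηdec ^ 2 * (l ^ 2 + σ₁ ^ 2)) - 1 :=
        Real.log_le_sub_one_of_pos (by positivity)
      have hid : β₂ * ηdec ^ 2 * (σ₁ ^ 2 * θ ^ 2 / (β₂ * ηdec ^ 2 * (l ^ 2 + σ₁ ^ 2)))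
          = σ₁ ^ 2 * θ ^ 2 / (l ^ 2 + σ₁ ^ 2) := by
        rw [mul_div_assoc']
        exact mul_div_mul_left _ _ (ne_of_gt hM)
      have h₁ : β₂ * ηdec ^ 2 * Real.log (σ₁ ^ 2 * θ ^ 2 / (β₂ * ηdec ^ 2 * (l ^ 2 + σ₁ ^ 2)))
          ≤ σ₁ ^ 2 * θ ^ 2 / (l ^ 2 + σ₁ ^ 2) - β₂ * ηdec ^ 2 := by
        have h := mul_le_mul_of_nonneg_left hlx hM.le
        rw [mul_sub, mul_one, hid] at h
        exact h
      linarith [h₁]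
end
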